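/- Let p be a joint PMF on V^n (n > 1) with marginals p_j satisfying p_j(x*_j) > 1 - ε for all j, and let q = ∏_j p_j. Then for any real r ≥ 1, the L^r distance satisfies ‖p - q‖_r < ((n-1)^r + 2n)^{1/r} · ε. -/

import Mathlib

/-!
Write `δⱼ = 1 - pⱼ(x*ⱼ) < ε` and `q = ∏ⱼ pⱼ`. Off the point `x*`, some coordinate `zⱼ ≠ x*ⱼ`,
so `p z` and `q z` are both at most `pⱼ(zⱼ) ≤ δⱼ < ε`. At `x*`, the union bound gives
`p x* ≥ 1 - ∑ δⱼ` and the Weierstrass product inequality gives `q x* ≥ 1 - ∑ δⱼ`, while both are at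
most `p₀(x*₀) = 1 - δ₀`; hence `|p x* - q x*| ≤ ∑_{j ≠ 0} δⱼ < (n - 1)ε`. The same lower bounds
make the total mass of `p` and of `q` off `x*` at most `∑ δⱼ < nε` each. Finally, the terms of size
`< ε` satisfy `aʳ ≤ εʳ⁻¹ a`, so they contribute at most `εʳ⁻¹ · 2nε = 2nεʳ` to `∑ aʳ`.
-/

open Finset

lemma one_sub_sum_one_sub_le_prod {ι : Type*} (s : Finset ι) {f : ι → ℝ}
    (h0 : ∀ i ∈ s, 0 ≤ f i) (h1 : ∀ i ∈ s, f i ≤ 1) :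
    1 - ∑ i ∈ s, (1 - f i) ≤ ∏ i ∈ s, f i := by
  induction s using Finset.cons_induction with
  | empty => simp
  | cons a s _ ih =>
    simp only [mem_cons, forall_eq_or_imp] at h0 h1
    rw [prod_cons, sum_cons]
    have hs : 0 ≤ ∑ i ∈ s, (1 - f i) := sum_nonneg fun i hi => sub_nonneg.2 (h1.2 i hi)
    nlinarith [mul_le_mul_of_nonneg_left (ih h0.2 h1.2) h0.1]

lemma prod_le_of_mem_of_le_one {ι : Type*} {s : Finset ι} {f : ι → ℝ}
    (h0 : ∀ i ∈ s, 0 ≤ f i) (h1 : ∀ i ∈ s, f i ≤ 1) {j : ι} (hj : j ∈ s) :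
    ∏ i ∈ s, f i ≤ f j := by
  simpa using prod_le_prod_of_subset_of_le_one (singleton_subset_iff.2 hj) h0 fun i hi _ => h1 i hi

lemma rpow_le_rpow_sub_one_mul {a b r : ℝ} (ha : 0 ≤ a) (hab : a ≤ b) (hr : 1 ≤ r) :
    a ^ r ≤ b ^ (r - 1) * a := by
  calc a ^ r = a ^ (r - 1) * a ^ (1 : ℝ) := by
        rw [← Real.rpow_add' ha (by linarith), sub_add_cancel]
    _ ≤ b ^ (r - 1) * a := by
        rw [Real.rpow_one]
        gcongr

section LpBound

variable {ι : Type*} [Fintype ι] [DecidableEq ι] {a : ι → ℝ} {x : ι} {ε c m r : ℝ}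

lemma sum_rpow_lt_of_one_large (ha : ∀ i, 0 ≤ a i) (hε : 0 < ε) (hr : 1 ≤ r)
    (hx : a x < c * ε) (hsmall : ∀ i ≠ x, a i ≤ ε) (hsum : ∑ i ∈ univ.erase x, a i ≤ m * ε) :
    ∑ i, a i ^ r < (c ^ r + m) * ε ^ r := by
  have hc : 0 ≤ c := nonneg_of_mul_nonneg_left ((ha x).trans hx.le) hε
  have hlarge : a x ^ r < c ^ r * ε ^ r := by
    rw [← Real.mul_rpow hc hε.le]
    exact Real.rpow_lt_rpow (ha x) hx (by linarith)
  have hrest : ∑ i ∈ univ.erase x, a i ^ r ≤ m * ε ^ r :=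
    calc ∑ i ∈ univ.erase x, a i ^ r ≤ ∑ i ∈ univ.erase x, ε ^ (r - 1) * a i :=
          sum_le_sum fun i hi => rpow_le_rpow_sub_one_mul (ha i) (hsmall i (ne_of_mem_erase hi)) hr
      _ ≤ ε ^ (r - 1) * (m * ε) := by
          rw [← mul_sum]; exact mul_le_mul_of_nonneg_left hsum (by positivity)
      _ = m * ε ^ r := by rw [Real.rpow_sub_one hε.ne']; field_simp
  rw [← add_sum_erase _ _ (mem_univ x)]
  linarith

lemma lpNorm_lt_of_one_large (ha : ∀ i, 0 ≤ a i) (hε : 0 < ε) (hr : 1 ≤ r)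
    (hx : a x < c * ε) (hsmall : ∀ i ≠ x, a i ≤ ε) (hsum : ∑ i ∈ univ.erase x, a i ≤ m * ε) :
    (∑ i, a i ^ r) ^ (1 / r) < (c ^ r + m) ^ (1 / r) * ε := by
  have hlt := sum_rpow_lt_of_one_large ha hε hr hx hsmall hsum
  have hS : 0 ≤ ∑ i, a i ^ r := sum_nonneg fun i _ => Real.rpow_nonneg (ha i) r
  have hC : 0 ≤ c ^ r + m := nonneg_of_mul_nonneg_left (hS.trans hlt.le) (by positivity)
  calc (∑ i, a i ^ r) ^ (1 / r) < ((c ^ r + m) * ε ^ r) ^ (1 / r) :=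
        Real.rpow_lt_rpow hS hlt (by positivity)
    _ = (c ^ r + m) ^ (1 / r) * ε := by
        rw [Real.mul_rpow hC (by positivity), ← Real.rpow_mul hε.le,
          mul_one_div_cancel (by positivity), Real.rpow_one]

end LpBound

section Marginal

variable {ι V : Type*} [Fintype ι] [DecidableEq ι] [Fintype V] [DecidableEq V]
  {p : (ι → V) → ℝ}

def marginal (p : (ι → V) → ℝ) (j : ι) (v : V) : ℝ :=
  ∑ z, if z j = v then p z else 0

lemma marginal_nonneg (hp0 : ∀ z, 0 ≤ p z) (j : ι) (v : V) : 0 ≤ marginal p j v :=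
  sum_nonneg fun z _ => by split_ifs <;> simp [hp0]

lemma apply_le_marginal (hp0 : ∀ z, 0 ≤ p z) (z : ι → V) (j : ι) : p z ≤ marginal p j (z j) := by
  rw [marginal]
  simpa using single_le_sum (f := fun z' : ι → V => if z' j = z j then p z' else 0)
    (fun z' _ => by split_ifs <;> simp [hp0]) (mem_univ z)

lemma sum_marginal (p : (ι → V) → ℝ) (j : ι) : ∑ v, marginal p j v = ∑ z, p z := by
  simp only [marginal]
  rw [sum_comm]
  simp

lemma one_sub_marginal (hp1 : ∑ z, p z = 1) (j : ι) (v : V) :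
    1 - marginal p j v = ∑ z, if z j = v then 0 else p z := by
  rw [← hp1, marginal, ← sum_sub_distrib]
  exact sum_congr rfl fun z _ => by split_ifs <;> ring

lemma marginal_le_one (hp0 : ∀ z, 0 ≤ p z) (hp1 : ∑ z, p z = 1) (j : ι) (v : V) :
    marginal p j v ≤ 1 := by
  rw [← hp1, ← sum_marginal]
  exact single_le_sum (fun w _ => marginal_nonneg hp0 j w) (mem_univ v)

lemma marginal_le_one_sub_marginal (hp0 : ∀ z, 0 ≤ p z) (hp1 : ∑ z, p z = 1) {j : ι} {v w : V}
    (hvw : v ≠ w) : marginal p j v ≤ 1 - marginal p j w := by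
  have := sum_le_sum_of_subset_of_nonneg (subset_univ {v, w})
    fun u _ _ => marginal_nonneg hp0 j u
  rw [sum_pair hvw, sum_marginal, hp1] at this
  linarith

lemma one_sub_sum_one_sub_marginal_le (hp0 : ∀ z, 0 ≤ p z) (hp1 : ∑ z, p z = 1) (x : ι → V) :
    1 - ∑ j, (1 - marginal p j (x j)) ≤ p x := by
  have hnn : ∀ z, ∀ j ∈ univ, 0 ≤ if z j = x j then 0 else p z := fun z j _ => by
    split_ifs <;> simp [hp0]
  have hcover : ∀ z ∈ univ.erase x, p z ≤ ∑ j, if z j = x j then 0 else p z := fun z hz => by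
    obtain ⟨j, hj⟩ := Function.ne_iff.mp (ne_of_mem_erase hz)
    simpa [hj] using single_le_sum (hnn z) (mem_univ j)
  have : 1 - p x ≤ ∑ j, (1 - marginal p j (x j)) :=
    calc 1 - p x = ∑ z ∈ univ.erase x, p z := by rw [sum_erase_eq_sub (mem_univ x), hp1]
      _ ≤ ∑ z ∈ univ.erase x, ∑ j, if z j = x j then 0 else p z := sum_le_sum hcover
      _ ≤ ∑ z, ∑ j, if z j = x j then 0 else p z :=
          sum_le_sum_of_subset_of_nonneg (subset_univ _) fun z _ _ => sum_nonneg (hnn z)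
      _ = ∑ j, (1 - marginal p j (x j)) := by
          rw [sum_comm]; exact sum_congr rfl fun j _ => (one_sub_marginal hp1 j (x j)).symm
  linarith

lemma sum_prod_marginal (hp1 : ∑ z, p z = 1) : ∑ z : ι → V, ∏ j, marginal p j (z j) = 1 := by
  rw [← Fintype.prod_sum]
  simp [sum_marginal, hp1]

lemma prod_marginal_le_marginal (hp0 : ∀ z, 0 ≤ p z) (hp1 : ∑ z, p z = 1) (z : ι → V) (j : ι) :
    ∏ i, marginal p i (z i) ≤ marginal p j (z j) :=
  prod_le_of_mem_of_le_one (fun i _ => marginal_nonneg hp0 i _)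
    (fun i _ => marginal_le_one hp0 hp1 i _) (mem_univ j)

lemma one_sub_sum_one_sub_marginal_le_prod (hp0 : ∀ z, 0 ≤ p z) (hp1 : ∑ z, p z = 1)
    (x : ι → V) : 1 - ∑ j, (1 - marginal p j (x j)) ≤ ∏ j, marginal p j (x j) :=
  one_sub_sum_one_sub_le_prod _ (fun j _ => marginal_nonneg hp0 j _)
    (fun j _ => marginal_le_one hp0 hp1 j _)

end Marginal

section Concentrated

variable {ι V : Type*} [Fintype ι] [DecidableEq ι] [Fintype V] [DecidableEq V]
  {p : (ι → V) → ℝ} {x : ι → V} {ε : ℝ}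

lemma abs_sub_prod_marginal_lt_of_ne (hp0 : ∀ z, 0 ≤ p z) (hp1 : ∑ z, p z = 1)
    (hx : ∀ j, 1 - marginal p j (x j) < ε) {z : ι → V} (hz : z ≠ x) :
    |p z - ∏ j, marginal p j (z j)| < ε := by
  obtain ⟨j, hj⟩ := Function.ne_iff.mp hz
  have hsmall : marginal p j (z j) < ε :=
    (marginal_le_one_sub_marginal hp0 hp1 hj).trans_lt (hx j)
  exact abs_sub_lt_of_nonneg_of_lt (hp0 z) ((apply_le_marginal hp0 z j).trans_lt hsmall)
    (prod_nonneg fun i _ => marginal_nonneg hp0 i _)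
    ((prod_marginal_le_marginal hp0 hp1 z j).trans_lt hsmall)

lemma sum_erase_abs_sub_prod_marginal_le (hp0 : ∀ z, 0 ≤ p z) (hp1 : ∑ z, p z = 1)
    (x : ι → V) :
    ∑ z ∈ univ.erase x, |p z - ∏ j, marginal p j (z j)| ≤ 2 * ∑ j, (1 - marginal p j (x j)) :=
  calc ∑ z ∈ univ.erase x, |p z - ∏ j, marginal p j (z j)|
      ≤ ∑ z ∈ univ.erase x, (p z + ∏ j, marginal p j (z j)) := sum_le_sum fun z _ => by
        have := prod_nonneg fun i (_ : i ∈ univ) => marginal_nonneg hp0 i (z i)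
        exact abs_sub_le_iff.2 ⟨by linarith [hp0 z], by linarith [hp0 z]⟩
    _ = (1 - p x) + (1 - ∏ j, marginal p j (x j)) := by
        rw [sum_add_distrib, sum_erase_eq_sub (mem_univ x), sum_erase_eq_sub (mem_univ x), hp1,
          sum_prod_marginal hp1]
    _ ≤ 2 * ∑ j, (1 - marginal p j (x j)) := by
        linarith [one_sub_sum_one_sub_marginal_le hp0 hp1 x,
          one_sub_sum_one_sub_marginal_le_prod hp0 hp1 x]

lemma abs_apply_sub_prod_marginal_lt (hp0 : ∀ z, 0 ≤ p z) (hp1 : ∑ z, p z = 1)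
    (hx : ∀ j, 1 - marginal p j (x j) < ε) (hι : 1 < Fintype.card ι) :
    |p x - ∏ j, marginal p j (x j)| < (Fintype.card ι - 1) * ε := by
  obtain ⟨j₀⟩ : Nonempty ι := Fintype.card_pos_iff.mp (by omega)
  have hrest : ∑ j ∈ univ.erase j₀, (1 - marginal p j (x j)) < (Fintype.card ι - 1) * ε := by
    have hcard : #(univ.erase j₀) = Fintype.card ι - 1 := by simp [card_erase_of_mem]
    calc _ < ∑ _j ∈ univ.erase j₀, ε :=
          sum_lt_sum_of_nonempty (by rw [← card_pos, hcard]; omega) fun j _ => hx j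
      _ = _ := by rw [sum_const, hcard, nsmul_eq_mul, Nat.cast_sub hι.le, Nat.cast_one]
  have hsplit := add_sum_erase univ (fun j => 1 - marginal p j (x j)) (mem_univ j₀)
  -- both values lie in `[1 - ∑ⱼ (1 - marginal p j (x j)), marginal p j₀ (x j₀)]`
  have := one_sub_sum_one_sub_marginal_le hp0 hp1 x
  have := one_sub_sum_one_sub_marginal_le_prod hp0 hp1 x
  have := apply_le_marginal hp0 x j₀
  have := prod_marginal_le_marginal hp0 hp1 x j₀
  rw [abs_sub_lt_iff]
  constructor <;> linarith

end Concentrated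

/-- For `n > 1`, any `r ≥ 1`, under high-confidence marginals, the
`L^r` distance between the joint `p` and the product of marginals `q` satisfies
`‖p - q‖_r < ((n-1)^r + 2n)^{1/r} · ε`. -/
theorem stmt_6 {V : Type*} [Fintype V] [DecidableEq V] {n : ℕ} (hn : 1 < n)
    (p : (Fin n → V) → ℝ) (pm : Fin n → V → ℝ) (x' : Fin n → V) (ε : ℝ)
    (hp0 : ∀ z, 0 ≤ p z) (hp1 : ∑ z : Fin n → V, p z = 1)
    (hm : ∀ j v, pm j v = ∑ z : Fin n → V, if z j = v then p z else 0)
    (hconf : ∀ j, pm j (x' j) > 1 - ε) (hε : 0 < ε)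
    (r : ℝ) (hr : 1 ≤ r) :
    (∑ z : Fin n → V, |p z - ∏ j, pm j (z j)| ^ r) ^ (1 / r) <
      (((n : ℝ) - 1) ^ r + 2 * n) ^ (1 / r) * ε := by
  obtain rfl : pm = marginal p := funext fun j => funext (hm j)
  have hx : ∀ j, 1 - marginal p j (x' j) < ε := fun j => by linarith [hconf j]
  have hdiag := abs_apply_sub_prod_marginal_lt hp0 hp1 hx (by simpa using hn)
  rw [Fintype.card_fin] at hdiag
  refine lpNorm_lt_of_one_large (fun z => abs_nonneg _) hε hr hdiag
    (fun z hz => (abs_sub_prod_marginal_lt_of_ne hp0 hp1 hx hz).le) ?_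
  calc _ ≤ 2 * ∑ j, (1 - marginal p j (x' j)) := sum_erase_abs_sub_prod_marginal_le hp0 hp1 x'
    _ ≤ 2 * ∑ _j : Fin n, ε := by gcongr with j; exact (hx j).le
    _ = 2 * n * ε := by rw [sum_const, card_univ, Fintype.card_fin, nsmul_eq_mul]; ring
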